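/- For any η ∈ Ω_r (a configuration on ℕ with infinitely many records) and any k ∈ ℕ, the k-skip map commutes with the one-step BBS(1) evolution: Ψ_k(T_1 η) = T_1 Ψ_k(η). Moreover Ψ_k(T_∞ η) = T_∞ Ψ_k(T_k η). -/

import Mathlib

/-- Seat occupation functions 𝒲_k(η,x). -/
def seatW (η : ℕ → ℤ) : ℕ → ℕ → ℤ
  | 0, _ => 0
  | x + 1, k =>
      seatW η x k
        + η (x + 1) * (1 - seatW η x k) * (∏ m ∈ Finset.Ico 1 k, seatW η x m)
        - (1 - η (x + 1)) * seatW η x k * (∏ m ∈ Finset.Ico 1 k, (1 - seatW η x m))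

/-- Boarding indicator η↑_k(x). -/
def seatUp (η : ℕ → ℤ) (k x : ℕ) : ℤ :=
  η x * (1 - seatW η (x - 1) k) * (∏ m ∈ Finset.Ico 1 k, seatW η (x - 1) m)

/-- Alighting indicator η↓_k(x). -/
def seatDown (η : ℕ → ℤ) (k x : ℕ) : ℤ :=
  (1 - η x) * seatW η (x - 1) k * (∏ m ∈ Finset.Ico 1 k, (1 - seatW η (x - 1) m))

/-- Record indicator r(η,x). (Seat events at x have seat number ≤ x.) -/
def recordInd (η : ℕ → ℤ) (x : ℕ) : ℤ :=
  1 - ∑ k ∈ Finset.Icc 1 x, (seatUp η k x + seatDown η k x)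

/-- ξ_k(η,x). -/
def xiSeat (η : ℕ → ℤ) (k x : ℕ) : ℤ :=
  (x : ℤ) - ∑ y ∈ Finset.Icc 1 x, ∑ m ∈ Finset.Icc 1 k, (seatUp η m y + seatDown η m y)

/-- s_k(η,i). -/
noncomputable def sSeat (η : ℕ → ℤ) (k i : ℕ) : ℕ :=
  sInf {x : ℕ | xiSeat η k x = (i : ℤ)}

/-- k-skip map Ψ_k. -/
noncomputable def skip (η : ℕ → ℤ) (k : ℕ) : ℕ → ℤ := fun x => η (sSeat η k x)

/-- Slot decomposition ζ_k(η,i). -/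
noncomputable def zeta (η : ℕ → ℤ) (k i : ℕ) : ℤ :=
  ∑ y ∈ Finset.Icc (sSeat η k i + 1) (sSeat η k (i + 1)),
    (seatUp η k y - seatUp η (k + 1) y)

/-- Carrier with capacity ℓ. -/
def carrier (η : ℕ → ℤ) (ℓ : ℕ) : ℕ → ℤ
  | 0 => 0
  | x + 1 =>
      if η (x + 1) = 1 ∧ carrier η ℓ x < (ℓ : ℤ) then carrier η ℓ x + 1
      else if η (x + 1) = 0 ∧ 0 < carrier η ℓ x then carrier η ℓ x - 1
      else carrier η ℓ x

/-- Carrier with infinite capacity. -/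
def carrierInf (η : ℕ → ℤ) : ℕ → ℤ
  | 0 => 0
  | x + 1 => if η (x + 1) = 1 then carrierInf η x + 1 else max (carrierInf η x - 1) 0

/-- One-step BBS(ℓ) evolution. -/
def tEvol (η : ℕ → ℤ) (ℓ : ℕ) : ℕ → ℤ :=
  fun x => η x + carrier η ℓ (x - 1) - carrier η ℓ x

/-- One-step BBS(∞) evolution. -/
def tEvolInf (η : ℕ → ℤ) : ℕ → ℤ :=
  fun x => η x + carrierInf η (x - 1) - carrierInf η x

/-!
Write `Ψ₁` for the map deleting every site that carries a seat-1 event, i.e. the first site of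
every run (site `0` counting as vacant). Two facts about `Ψ₁` drive the proof. First, at a kept
site seat `m + 1` of `η` evolves exactly like seat `m` of `Ψ₁ η`, hence `Ψ_{k+1} = Ψ_k ∘ Ψ₁`.
Second, `Ψ₁ (T_{ℓ+1} η) = T₁ (T_ℓ (Ψ₁ η))`, where `T₁` is the shift inserting a `0` at site `1`:
the carrier of capacity `ℓ + 1` is the carrier of capacity `ℓ` run on `Ψ₁ η` plus the ball in the
bottom seat, and `T_{ℓ+1} η` differs from `η` at every seat-1 event of `η`, so that the
`(n + 1)`-th kept site of `T_{ℓ+1} η` carries the value of `T_{ℓ+1} η` at the `n`-th kept site of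
`η`. As `T_∞` and `T_L` agree on the first `L` sites, also `Ψ₁ (T_∞ η) = T₁ (T_∞ (Ψ₁ η))`. Both
claims then follow by induction on `k`, using that `T₁` commutes with `T_∞`. Throughout, the walk
`Σ (2η - 1)` stays unbounded below, i.e. `Ω_r` is preserved by `T_ℓ`, `T_∞` and `Ψ₁`, which keeps
every slot position `s_k(η, i)` finite.
-/

open Finset

def IsBinary (η : ℕ → ℤ) : Prop := ∀ x, η x = 0 ∨ η x = 1

def InfinitelyManyRecords (η : ℕ → ℤ) : Prop := ∀ N : ℕ, ∃ x, N ≤ x ∧ recordInd η x = 1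

lemma prod_eq_zero_or_eq_one {ι R : Type*} [CommMonoidWithZero R] {s : Finset ι} {f : ι → R}
    (h : ∀ j ∈ s, f j = 0 ∨ f j = 1) :
    ∏ j ∈ s, f j = 0 ∨ ∏ j ∈ s, f j = 1 :=
  prod_induction f (fun a => a = 0 ∨ a = 1)
    (by rintro a b (rfl | rfl) (rfl | rfl) <;> simp) (Or.inr rfl) h

lemma prod_one_sub_eq_one_iff {ι : Type*} {s : Finset ι} {f : ι → ℤ}
    (h : ∀ j ∈ s, f j = 0 ∨ f j = 1) :
    ∏ j ∈ s, (1 - f j) = 1 ↔ ∑ j ∈ s, f j = 0 := by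
  rw [sum_eq_zero_iff_of_nonneg fun j hj => by rcases h j hj with h' | h' <;> simp [h']]
  refine ⟨fun hp j hj => ?_, fun hz => prod_eq_one fun j hj => by simp [hz j hj]⟩
  rcases h j hj with h0 | h1
  · exact h0
  · rw [prod_eq_zero hj (by simp [h1])] at hp
    simp at hp

lemma prod_Icc_one_succ {M : Type*} [CommMonoid M] (f : ℕ → M) (k : ℕ) :
    ∏ j ∈ Icc 1 (k + 1), f j = f 1 * ∏ j ∈ Icc 1 k, f (j + 1) := by
  rw [← Ico_add_one_right_eq_Icc, prod_eq_prod_Ico_succ_bot (by omega),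
    ← Ico_add_one_right_eq_Icc, prod_Ico_add' f 1 (k + 1) 1]

lemma prod_Ico_one_succ {M : Type*} [CommMonoid M] (f : ℕ → M) {m : ℕ} (hm : 1 ≤ m) :
    ∏ j ∈ Ico 1 (m + 1), f j = f 1 * ∏ j ∈ Ico 1 m, f (j + 1) := by
  rw [prod_eq_prod_Ico_succ_bot (by omega), prod_Ico_add' f 1 m 1]

lemma IsBinary.one_sub {η : ℕ → ℤ} (hη : IsBinary η) : IsBinary (fun x => 1 - η x) :=
  fun x => by rcases hη x with h | h <;> simp [h]

section Seats

variable {η : ℕ → ℤ}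

lemma seatW_succ (η : ℕ → ℤ) (x k : ℕ) :
    seatW η (x + 1) k = seatW η x k + seatUp η k (x + 1) - seatDown η k (x + 1) := by
  simp [seatW, seatUp, seatDown]

lemma seatW_succ_one (η : ℕ → ℤ) (x : ℕ) : seatW η (x + 1) 1 = η (x + 1) := by
  simp [seatW]; ring

lemma seatW_eq_zero_of_lt {x m : ℕ} (h : x < m) : seatW η x m = 0 := by
  induction x generalizing m with
  | zero => rfl
  | succ x ih =>
    rw [seatW, ih (by omega), prod_eq_zero (i := m - 1) (by simp; omega) (ih (by omega))]
    ring

lemma IsBinary.seatW (hη : IsBinary η) (x : ℕ) : IsBinary (seatW η x) := by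
  induction x with
  | zero => exact fun _ => Or.inl rfl
  | succ x ih =>
    intro k
    rcases prod_eq_zero_or_eq_one (s := Ico 1 k) fun m _ => ih m with hP | hP <;>
    rcases prod_eq_zero_or_eq_one (s := Ico 1 k) fun m _ => ih.one_sub m with hQ | hQ <;>
    rcases hη (x + 1) with ha | ha <;> rcases ih k with hw | hw <;>
    simp [_root_.seatW, ha, hw, hP, hQ]

lemma sum_seatUp (η : ℕ → ℤ) (k x : ℕ) :
    ∑ m ∈ Icc 1 k, seatUp η m x = η x * (1 - ∏ m ∈ Icc 1 k, seatW η (x - 1) m) := by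
  induction k with
  | zero => simp
  | succ k ih =>
    rw [sum_Icc_succ_top (by omega), prod_Icc_succ_top (by omega), ih, seatUp,
      Ico_add_one_right_eq_Icc]
    ring

lemma sum_seatDown (η : ℕ → ℤ) (k x : ℕ) :
    ∑ m ∈ Icc 1 k, seatDown η m x =
      (1 - η x) * (1 - ∏ m ∈ Icc 1 k, (1 - seatW η (x - 1) m)) := by
  induction k with
  | zero => simp
  | succ k ih =>
    rw [sum_Icc_succ_top (by omega), prod_Icc_succ_top (by omega), ih, seatDown,
      Ico_add_one_right_eq_Icc]
    ring

def seatEvents (η : ℕ → ℤ) (k x : ℕ) : ℤ :=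
  ∑ m ∈ Icc 1 k, (seatUp η m x + seatDown η m x)

lemma recordInd_eq_one_sub_seatEvents (η : ℕ → ℤ) (x : ℕ) :
    recordInd η x = 1 - seatEvents η x x := rfl

lemma seatEvents_eq (η : ℕ → ℤ) (k x : ℕ) :
    seatEvents η k x = η x * (1 - ∏ m ∈ Icc 1 k, seatW η (x - 1) m)
      + (1 - η x) * (1 - ∏ m ∈ Icc 1 k, (1 - seatW η (x - 1) m)) := by
  rw [seatEvents, sum_add_distrib, sum_seatUp, sum_seatDown]

lemma IsBinary.seatEvents (hη : IsBinary η) (k : ℕ) : IsBinary (seatEvents η k) := fun x => by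
  rw [seatEvents_eq]
  rcases prod_eq_zero_or_eq_one (s := Icc 1 k) fun m _ => hη.seatW (x - 1) m with hP | hP <;>
  rcases prod_eq_zero_or_eq_one (s := Icc 1 k) fun m _ => (hη.seatW (x - 1)).one_sub m
    with hQ | hQ <;>
  rcases hη x with ha | ha <;> simp [ha, hP, hQ]

lemma seatEvents_one_succ (hη : IsBinary η) (x : ℕ) :
    seatEvents η 1 (x + 1) = if η (x + 1) = seatW η x 1 then 0 else 1 := by
  rw [seatEvents_eq]
  rcases hη (x + 1) with ha | ha <;> rcases hη.seatW x 1 with hw | hw <;> simp [ha, hw]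

lemma seatEvents_one_succ_eq_zero_iff (hη : IsBinary η) (x : ℕ) :
    seatEvents η 1 (x + 1) = 0 ↔ η (x + 1) = seatW η x 1 := by
  rw [seatEvents_one_succ hη]; split_ifs <;> simpa

lemma seatEvents_succ_eq_one_of_ne (hη : IsBinary η) {k x : ℕ} (hk : 1 ≤ k)
    (hx : η (x + 1) ≠ seatW η x 1) : seatEvents η k (x + 1) = 1 := by
  have h1 : 1 ∈ Icc 1 k := by simp [hk]
  rw [seatEvents_eq, add_tsub_cancel_right]
  rcases hη (x + 1) with ha | ha <;> rcases hη.seatW x 1 with hw | hw <;>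
    simp_all [prod_eq_zero h1]

end Seats

section Carrier

variable {η : ℕ → ℤ}

lemma prod_seatW_eq_zero (η : ℕ → ℤ) (x : ℕ) : ∏ m ∈ Icc 1 (x + 1), seatW η x m = 0 :=
  prod_eq_zero (i := x + 1) (by simp) (seatW_eq_zero_of_lt (by omega))

lemma prod_one_sub_seatW_eq_one_iff (hη : IsBinary η) (x : ℕ) :
    ∏ m ∈ Icc 1 (x + 1), (1 - seatW η x m) = 1 ↔ ∑ m ∈ Icc 1 x, seatW η x m = 0 := by
  rw [prod_Icc_succ_top (by omega), seatW_eq_zero_of_lt (by omega), sub_zero, mul_one]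
  exact prod_one_sub_eq_one_iff fun m _ => hη.seatW x m

lemma carrierInf_eq_sum_seatW (hη : IsBinary η) (x : ℕ) :
    carrierInf η x = ∑ m ∈ Icc 1 x, seatW η x m := by
  induction x with
  | zero => simp [carrierInf]
  | succ x ih =>
    have hsum : ∑ m ∈ Icc 1 (x + 1), seatW η (x + 1) m = carrierInf η x + η (x + 1)
        - (1 - η (x + 1)) * (1 - ∏ m ∈ Icc 1 (x + 1), (1 - seatW η x m)) := by
      simp_rw [seatW_succ]
      rw [sum_sub_distrib, sum_add_distrib, sum_seatUp, sum_seatDown, sum_Icc_succ_top (by omega),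
        seatW_eq_zero_of_lt (by omega), add_tsub_cancel_right, prod_seatW_eq_zero, ih]
      ring
    have hQ := prod_one_sub_seatW_eq_one_iff hη x
    rw [← ih] at hQ
    have hc : 0 ≤ carrierInf η x := by
      rw [ih]; exact sum_nonneg fun m _ => by rcases hη.seatW x m with h | h <;> simp [h]
    rw [hsum, carrierInf]
    rcases prod_eq_zero_or_eq_one (s := Icc 1 (x + 1)) fun m _ => (hη.seatW x).one_sub m
      with hp | hp
    · have hc0 : carrierInf η x ≠ 0 := fun h => by simp [hQ.2 h] at hp
      rcases hη (x + 1) with ha | ha <;> simp [ha, hp]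
      omega
    · rcases hη (x + 1) with ha | ha <;> simp [ha, hp, hQ.1 hp]

lemma carrierInf_eq_zero_iff (hη : IsBinary η) (x : ℕ) :
    carrierInf η x = 0 ↔ ∀ m, 1 ≤ m → seatW η x m = 0 := by
  rw [carrierInf_eq_sum_seatW hη,
    sum_eq_zero_iff_of_nonneg fun m _ => by rcases hη.seatW x m with h | h <;> simp [h]]
  refine ⟨fun h m hm => ?_, fun h m hm => h m (mem_Icc.1 hm).1⟩
  rcases le_or_gt m x with hmx | hmx
  · exact h m (mem_Icc.2 ⟨hm, hmx⟩)
  · exact seatW_eq_zero_of_lt hmx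

lemma recordInd_succ_eq_one_iff (hη : IsBinary η) (x : ℕ) :
    recordInd η (x + 1) = 1 ↔ η (x + 1) = 0 ∧ carrierInf η x = 0 := by
  have hQ := prod_one_sub_seatW_eq_one_iff hη x
  rw [← carrierInf_eq_sum_seatW hη] at hQ
  rw [recordInd_eq_one_sub_seatEvents, seatEvents_eq, add_tsub_cancel_right, prod_seatW_eq_zero,
    ← hQ]
  rcases hη (x + 1) with ha | ha <;>
  rcases prod_eq_zero_or_eq_one (s := Icc 1 (x + 1)) fun m _ => (hη.seatW x).one_sub m
    with hp | hp <;>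
  simp [hp, ha]

lemma seatEvents_succ_eq_zero_of_record (hη : IsBinary η) {x : ℕ}
    (hr : recordInd η (x + 1) = 1) (k : ℕ) : seatEvents η k (x + 1) = 0 := by
  obtain ⟨ha, hc⟩ := (recordInd_succ_eq_one_iff hη x).1 hr
  have hW := (carrierInf_eq_zero_iff hη x).1 hc
  have hP : ∏ m ∈ Icc 1 k, (1 - seatW η x m) = 1 :=
    prod_eq_one fun m hm => by rw [hW m (mem_Icc.1 hm).1, sub_zero]
  rw [seatEvents_eq, add_tsub_cancel_right, ha, hP]
  ring

end Carrier

lemma exists_eq_of_succ_le_add_one {f : ℕ → ℤ} (hstep : ∀ x, f (x + 1) ≤ f x + 1) {a : ℤ}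
    (h0 : f 0 ≤ a) {X : ℕ} (hX : a ≤ f X) : ∃ x ≤ X, f x = a := by
  induction X with
  | zero => exact ⟨0, le_rfl, le_antisymm h0 hX⟩
  | succ X ih =>
    by_cases h : a ≤ f X
    · obtain ⟨x, hx, hfx⟩ := ih h
      exact ⟨x, by omega, hfx⟩
    · exact ⟨X + 1, le_rfl, by have := hstep X; omega⟩

section Slots

variable {η : ℕ → ℤ} {k : ℕ}

lemma xiSeat_zero (η : ℕ → ℤ) (k : ℕ) : xiSeat η k 0 = 0 := by
  simp [xiSeat]

lemma xiSeat_succ (η : ℕ → ℤ) (k x : ℕ) :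
    xiSeat η k (x + 1) = xiSeat η k x + 1 - seatEvents η k (x + 1) := by
  rw [xiSeat, xiSeat, sum_Icc_succ_top (by omega)]
  push_cast
  rw [seatEvents]
  ring

lemma xiSeat_one_succ (hη : IsBinary η) (x : ℕ) :
    xiSeat η 1 (x + 1) = xiSeat η 1 x + if η (x + 1) = seatW η x 1 then 1 else 0 := by
  rw [xiSeat_succ, seatEvents_one_succ hη]
  split_ifs <;> ring

lemma xiSeat_succ_le (hη : IsBinary η) (k x : ℕ) :
    xiSeat η k (x + 1) ≤ xiSeat η k x + 1 := by
  rw [xiSeat_succ]; rcases hη.seatEvents k (x + 1) with h | h <;> omega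

lemma xiSeat_mono (hη : IsBinary η) (k : ℕ) : Monotone (xiSeat η k) :=
  monotone_nat_of_le_succ fun x => by
    rw [xiSeat_succ]; rcases hη.seatEvents k (x + 1) with h | h <;> omega

lemma xiSeat_nonneg (hη : IsBinary η) (k x : ℕ) : 0 ≤ xiSeat η k x :=
  xiSeat_zero η k ▸ xiSeat_mono hη k (Nat.zero_le x)

lemma seatEvents_succ_eq_one_of_xiSeat_eq (hη : IsBinary η) {a b z : ℕ}
    (h : xiSeat η k a = xiSeat η k b) (haz : a ≤ z) (hzb : z < b) :
    seatEvents η k (z + 1) = 1 := by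
  have h1 := xiSeat_mono hη k haz
  have h2 := xiSeat_mono hη k (show z + 1 ≤ b by omega)
  have := xiSeat_succ η k z
  rcases hη.seatEvents k (z + 1) with h' | h' <;> omega

lemma exists_le_xiSeat (hη : IsBinary η) (hrec : InfinitelyManyRecords η) (k i : ℕ) :
    ∃ x, (i : ℤ) ≤ xiSeat η k x := by
  induction i with
  | zero => exact ⟨0, by simp [xiSeat_zero]⟩
  | succ i ih =>
    obtain ⟨x, hx⟩ := ih
    obtain ⟨y, hy, hr⟩ := hrec (x + 1)
    obtain ⟨y, rfl⟩ : ∃ z, y = z + 1 := ⟨y - 1, by omega⟩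
    have hstep := xiSeat_succ η k y
    rw [seatEvents_succ_eq_zero_of_record hη hr] at hstep
    have := xiSeat_mono hη k (show x ≤ y by omega)
    exact ⟨y + 1, by push_cast; omega⟩

lemma xiSeat_sSeat_of_exists {i : ℕ} (h : ∃ x, xiSeat η k x = i) :
    xiSeat η k (sSeat η k i) = i :=
  Nat.sInf_mem h

lemma xiSeat_sSeat (hη : IsBinary η) (hrec : InfinitelyManyRecords η) (k i : ℕ) :
    xiSeat η k (sSeat η k i) = i := by
  obtain ⟨X, hX⟩ := exists_le_xiSeat hη hrec k i
  obtain ⟨x, -, hx⟩ := exists_eq_of_succ_le_add_one (xiSeat_succ_le hη k)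
    (by rw [xiSeat_zero]; positivity) hX
  exact xiSeat_sSeat_of_exists ⟨x, hx⟩

lemma sSeat_le_of_xiSeat_eq {i x : ℕ} (h : xiSeat η k x = i) : sSeat η k i ≤ x :=
  Nat.sInf_le h

lemma sSeat_zero (η : ℕ → ℤ) (k : ℕ) : sSeat η k 0 = 0 :=
  Nat.le_zero.1 (sSeat_le_of_xiSeat_eq (xiSeat_zero η k))

lemma sSeat_succ_of_seatEvents_eq_zero (hη : IsBinary η) {x i : ℕ} (hx : xiSeat η k x = i)
    (hev : seatEvents η k (x + 1) = 0) : sSeat η k (i + 1) = x + 1 := by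
  have hx1 : xiSeat η k (x + 1) = ((i + 1 : ℕ) : ℤ) := by
    rw [xiSeat_succ, hev, hx]; push_cast; ring
  refine le_antisymm (sSeat_le_of_xiSeat_eq hx1) (not_lt.1 fun hlt => ?_)
  have hmem := xiSeat_sSeat_of_exists ⟨x + 1, hx1⟩
  have := xiSeat_mono hη k (Nat.lt_succ_iff.1 hlt)
  push_cast at *
  omega

lemma exists_sSeat_succ (hη : IsBinary η) (hrec : InfinitelyManyRecords η) (k i : ℕ) :
    ∃ x, sSeat η k (i + 1) = x + 1 ∧ xiSeat η k x = i ∧ seatEvents η k (x + 1) = 0 := by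
  have hs := xiSeat_sSeat hη hrec k (i + 1)
  obtain ⟨x, hx⟩ : ∃ x, sSeat η k (i + 1) = x + 1 :=
    Nat.exists_eq_succ_of_ne_zero fun h0 => by rw [h0, xiSeat_zero] at hs; omega
  have hmin : xiSeat η k x ≠ ((i + 1 : ℕ) : ℤ) :=
    Nat.notMem_of_lt_sInf (show x < sSeat η k (i + 1) by omega)
  have hstep := xiSeat_succ η k x
  rw [hx] at hs
  refine ⟨x, hx, ?_, ?_⟩ <;> push_cast at * <;>
    rcases hη.seatEvents k (x + 1) with h | h <;> omega

end Slots

section SkipOne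

variable {η : ℕ → ℤ}

lemma seatW_succ_of_ne (hη : IsBinary η) {x m : ℕ} (hx : η (x + 1) ≠ seatW η x 1)
    (hm : 2 ≤ m) : seatW η (x + 1) m = seatW η x m := by
  have h1 : 1 ∈ Ico 1 m := by simp; omega
  rcases hη (x + 1) with ha | ha <;> rcases hη.seatW x 1 with hw | hw
  · exact absurd (ha.trans hw.symm) hx
  · simp [seatW, ha, prod_eq_zero (f := fun j => 1 - seatW η x j) h1 (by simp [hw])]
  · simp [seatW, ha, prod_eq_zero h1 hw]
  · exact absurd (ha.trans hw.symm) hx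

lemma seatW_eq_of_xiSeat_one_eq (hη : IsBinary η) {a b m : ℕ} (hab : a ≤ b)
    (h : xiSeat η 1 a = xiSeat η 1 b) (hm : 2 ≤ m) : seatW η b m = seatW η a m := by
  induction b, hab using Nat.le_induction with
  | base => rfl
  | succ b hab ih =>
    have hb : xiSeat η 1 a = xiSeat η 1 b :=
      le_antisymm (xiSeat_mono hη 1 hab) (h ▸ xiSeat_mono hη 1 (Nat.le_succ b))
    have hev := seatEvents_succ_eq_one_of_xiSeat_eq hη h hab (Nat.lt_succ_self b)
    have hne : η (b + 1) ≠ seatW η b 1 := fun he => by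
      simp [(seatEvents_one_succ_eq_zero_iff hη b).2 he] at hev
    rw [seatW_succ_of_ne hη hne hm, ih hb]

lemma seatW_succ_eq_of_kept {σ : ℕ → ℤ} (hη : IsBinary η) {i y : ℕ}
    (hσ : σ (i + 1) = η (y + 1)) (hkept : η (y + 1) = seatW η y 1)
    (hW : ∀ j, 1 ≤ j → seatW σ i j = seatW η y (j + 1)) {m : ℕ} (hm : 1 ≤ m) :
    seatW σ (i + 1) m = seatW η (y + 1) (m + 1) := by
  have hP : ∏ j ∈ Ico 1 (m + 1), seatW η y j = η (y + 1) * ∏ j ∈ Ico 1 m, seatW σ i j := by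
    rw [prod_Ico_one_succ _ hm, ← hkept]
    exact congrArg _ (prod_congr rfl fun j hj => (hW j (mem_Ico.1 hj).1).symm)
  have hQ : ∏ j ∈ Ico 1 (m + 1), (1 - seatW η y j)
      = (1 - η (y + 1)) * ∏ j ∈ Ico 1 m, (1 - seatW σ i j) := by
    rw [prod_Ico_one_succ (fun j => 1 - seatW η y j) hm, ← hkept]
    exact congrArg _ (prod_congr rfl fun j hj => by rw [hW j (mem_Ico.1 hj).1])
  simp only [seatW]
  rw [hP, hQ, hσ, hW m hm]
  rcases hη (y + 1) with ha | ha <;> rw [ha] <;> ring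

lemma seatEvents_succ_eq_of_kept {σ : ℕ → ℤ} (hη : IsBinary η) {i y : ℕ}
    (hσ : σ (i + 1) = η (y + 1)) (hkept : η (y + 1) = seatW η y 1)
    (hW : ∀ j, 1 ≤ j → seatW σ i j = seatW η y (j + 1)) (k : ℕ) :
    seatEvents σ k (i + 1) = seatEvents η (k + 1) (y + 1) := by
  have hP : ∏ j ∈ Icc 1 k, seatW σ i j = ∏ j ∈ Icc 1 k, seatW η y (j + 1) :=
    prod_congr rfl fun j hj => hW j (mem_Icc.1 hj).1
  have hQ : ∏ j ∈ Icc 1 k, (1 - seatW σ i j) = ∏ j ∈ Icc 1 k, (1 - seatW η y (j + 1)) :=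
    prod_congr rfl fun j hj => by rw [hW j (mem_Icc.1 hj).1]
  rw [seatEvents_eq, seatEvents_eq, add_tsub_cancel_right, add_tsub_cancel_right,
    prod_Icc_one_succ, prod_Icc_one_succ (fun j => 1 - seatW η y j), ← hkept, hσ, hP, hQ]
  rcases hη (y + 1) with ha | ha <;> rw [ha] <;> ring

lemma seatW_skip_one (hη : IsBinary η) (hrec : InfinitelyManyRecords η) (i : ℕ) {j : ℕ}
    (hj : 1 ≤ j) : seatW (skip η 1) i j = seatW η (sSeat η 1 (i + 1) - 1) (j + 1) := by
  induction i generalizing j with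
  | zero =>
    obtain ⟨x, hs, hξ, -⟩ := exists_sSeat_succ hη hrec 1 0
    rw [hs, Nat.add_sub_cancel,
      seatW_eq_of_xiSeat_one_eq hη (Nat.zero_le x) (by rw [hξ, xiSeat_zero]; rfl) (by omega)]
    rfl
  | succ i ih =>
    obtain ⟨x, hs, hξ, hev⟩ := exists_sSeat_succ hη hrec 1 i
    obtain ⟨x', hs', hξ', -⟩ := exists_sSeat_succ hη hrec 1 (i + 1)
    have hξx : xiSeat η 1 (x + 1) = ((i + 1 : ℕ) : ℤ) := by
      rw [xiSeat_succ, hev, hξ]; push_cast; ring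
    have hx' : x + 1 ≤ x' := hs ▸ sSeat_le_of_xiSeat_eq hξ'
    rw [hs', Nat.add_sub_cancel, seatW_eq_of_xiSeat_one_eq hη hx' (by rw [hξx, hξ']) (by omega)]
    have hkept := (seatEvents_one_succ_eq_zero_iff hη x).1 hev
    refine seatW_succ_eq_of_kept hη (by simp [skip, hs]) hkept (fun j hj => ?_) hj
    rw [ih hj, hs, Nat.add_sub_cancel]

lemma seatEvents_skip_one (hη : IsBinary η) (hrec : InfinitelyManyRecords η) (k i : ℕ) :
    seatEvents (skip η 1) k (i + 1) = seatEvents η (k + 1) (sSeat η 1 (i + 1)) := by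
  obtain ⟨x, hs, -, hev⟩ := exists_sSeat_succ hη hrec 1 i
  have hkept := (seatEvents_one_succ_eq_zero_iff hη x).1 hev
  rw [hs]
  refine seatEvents_succ_eq_of_kept hη (by simp [skip, hs]) hkept (fun j hj => ?_) k
  rw [seatW_skip_one hη hrec i hj, hs, Nat.add_sub_cancel]

lemma IsBinary.skip (hη : IsBinary η) (k : ℕ) : IsBinary (skip η k) := fun _ => hη _

lemma InfinitelyManyRecords.skip_one (hη : IsBinary η) (hrec : InfinitelyManyRecords η) :
    InfinitelyManyRecords (skip η 1) := by
  intro N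
  obtain ⟨X, hX⟩ := exists_le_xiSeat hη hrec 1 N
  obtain ⟨y, hy, hr⟩ := hrec (X + 1)
  obtain ⟨y, rfl⟩ : ∃ z, y = z + 1 := ⟨y - 1, by omega⟩
  obtain ⟨i, hi⟩ := Int.eq_ofNat_of_zero_le (xiSeat_nonneg hη 1 y)
  have hs := sSeat_succ_of_seatEvents_eq_zero hη hi (seatEvents_succ_eq_zero_of_record hη hr 1)
  have := xiSeat_mono hη 1 (show X ≤ y by omega)
  refine ⟨i + 1, by omega, ?_⟩
  rw [recordInd_eq_one_sub_seatEvents, seatEvents_skip_one hη hrec, hs,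
    seatEvents_succ_eq_zero_of_record hη hr, sub_zero]

end SkipOne

section SkipComposition

variable {η : ℕ → ℤ}

lemma xiSeat_succ_eq_xiSeat_skip_one (hη : IsBinary η) (hrec : InfinitelyManyRecords η)
    (k : ℕ) {x i : ℕ} (hi : xiSeat η 1 x = i) :
    xiSeat η (k + 1) x = xiSeat (skip η 1) k i := by
  induction x generalizing i with
  | zero =>
    rw [xiSeat_zero] at hi
    rw [show i = 0 by omega, xiSeat_zero, xiSeat_zero]
  | succ x ih =>
    obtain ⟨i', hi'⟩ := Int.eq_ofNat_of_zero_le (xiSeat_nonneg hη 1 x)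
    rw [xiSeat_one_succ hη, hi'] at hi
    by_cases hkept : η (x + 1) = seatW η x 1
    · have hev := (seatEvents_one_succ_eq_zero_iff hη x).2 hkept
      rw [if_pos hkept] at hi
      rw [show i = i' + 1 by omega, xiSeat_succ, xiSeat_succ, ih hi',
        seatEvents_skip_one hη hrec, sSeat_succ_of_seatEvents_eq_zero hη hi' hev]
    · rw [if_neg hkept] at hi
      rw [show i = i' by omega, xiSeat_succ, seatEvents_succ_eq_one_of_ne hη (by omega) hkept,
        ih hi']
      ring

lemma sSeat_succ_eq_sSeat_skip_one (hη : IsBinary η) (hrec : InfinitelyManyRecords η)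
    (k n : ℕ) :
    sSeat η (k + 1) n = sSeat η 1 (sSeat (skip η 1) k n) := by
  set a := sSeat (skip η 1) k n
  have hxa : xiSeat η (k + 1) (sSeat η 1 a) = n := by
    rw [xiSeat_succ_eq_xiSeat_skip_one hη hrec k (xiSeat_sSeat hη hrec 1 a),
      xiSeat_sSeat (hη.skip 1) (hrec.skip_one hη) k n]
  refine le_antisymm (sSeat_le_of_xiSeat_eq hxa) ?_
  set y := sSeat η (k + 1) n
  obtain ⟨b, hb⟩ := Int.eq_ofNat_of_zero_le (xiSeat_nonneg hη 1 y)
  have hab : a ≤ b := sSeat_le_of_xiSeat_eq <| by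
    rw [← xiSeat_succ_eq_xiSeat_skip_one hη hrec k hb, xiSeat_sSeat hη hrec (k + 1) n]
  obtain ⟨z, hzy, hz⟩ := exists_eq_of_succ_le_add_one (xiSeat_succ_le hη 1)
    (by rw [xiSeat_zero]; positivity) (show (a : ℤ) ≤ xiSeat η 1 y by omega)
  exact (sSeat_le_of_xiSeat_eq hz).trans hzy

lemma skip_succ (hη : IsBinary η) (hrec : InfinitelyManyRecords η) (k : ℕ) :
    skip η (k + 1) = skip (skip η 1) k :=
  funext fun n => by simp only [skip, sSeat_succ_eq_sSeat_skip_one hη hrec k n]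

lemma skip_zero (η : ℕ → ℤ) : skip η 0 = η := by
  have hξ : ∀ x, xiSeat η 0 x = x := fun x => by simp [xiSeat]
  funext i
  have : sSeat η 0 i = i := by
    simpa [hξ] using xiSeat_sSeat_of_exists (k := 0) ⟨i, hξ i⟩
  simp [skip, this]

end SkipComposition

section Evolution

variable {η : ℕ → ℤ}

lemma carrier_nonneg (η : ℕ → ℤ) (ℓ x : ℕ) : 0 ≤ carrier η ℓ x := by
  induction x with
  | zero => rfl
  | succ x ih => rw [carrier]; split_ifs <;> omega

lemma carrier_le (η : ℕ → ℤ) (ℓ x : ℕ) : carrier η ℓ x ≤ ℓ := by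
  induction x with
  | zero => simp [carrier]
  | succ x ih => rw [carrier]; split_ifs <;> omega

lemma carrierInf_nonneg (η : ℕ → ℤ) (x : ℕ) : 0 ≤ carrierInf η x := by
  induction x with
  | zero => rfl
  | succ x ih => rw [carrierInf]; split_ifs <;> omega

lemma carrierInf_le (η : ℕ → ℤ) (x : ℕ) : carrierInf η x ≤ x := by
  induction x with
  | zero => rfl
  | succ x ih => rw [carrierInf]; split_ifs <;> push_cast <;> omega

lemma tEvol_zero_right (η : ℕ → ℤ) : tEvol η 0 = η := by
  have hc : ∀ x, carrier η 0 x = 0 :=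
    fun x => le_antisymm (carrier_le η 0 x) (carrier_nonneg η 0 x)
  funext x
  simp [tEvol, hc]

lemma IsBinary.tEvol (hη : IsBinary η) (ℓ : ℕ) : IsBinary (tEvol η ℓ) := by
  rintro (_ | x)
  · simpa [_root_.tEvol] using hη 0
  · simp only [_root_.tEvol, Nat.add_sub_cancel, carrier]
    rcases hη (x + 1) with h | h <;> simp only [h] <;> split_ifs <;> omega

lemma IsBinary.tEvolInf (hη : IsBinary η) : IsBinary (tEvolInf η) := by
  rintro (_ | x)
  · simpa [_root_.tEvolInf] using hη 0
  · have := carrierInf_nonneg η x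
    simp only [_root_.tEvolInf, Nat.add_sub_cancel, carrierInf]
    rcases hη (x + 1) with h | h <;> simp [h] <;> omega

lemma carrier_one_succ (hη : IsBinary η) (x : ℕ) : carrier η 1 (x + 1) = η (x + 1) := by
  induction x with
  | zero => rcases hη 1 with h | h <;> simp [carrier, h]
  | succ x ih =>
    rw [carrier, ih]
    rcases hη (x + 2) with h | h <;> rcases hη (x + 1) with h' | h' <;> simp [h, h']

lemma tEvol_apply_zero (η : ℕ → ℤ) (ℓ : ℕ) : tEvol η ℓ 0 = η 0 := by simp [tEvol]

lemma tEvol_one_apply_one (hη : IsBinary η) : tEvol η 1 1 = 0 := by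
  have := carrier_one_succ hη 0
  simp only [tEvol, Nat.sub_self, zero_add] at this ⊢
  rw [this, show carrier η 1 0 = 0 from rfl]
  ring

lemma tEvol_one_apply_add_two (hη : IsBinary η) (x : ℕ) : tEvol η 1 (x + 2) = η (x + 1) := by
  simp [tEvol, carrier_one_succ hη]

lemma tEvolInf_tEvol_one (hη : IsBinary η) : tEvolInf (tEvol η 1) = tEvol (tEvolInf η) 1 := by
  have hc : ∀ x, carrierInf (tEvol η 1) (x + 1) = carrierInf η x := by
    intro x
    induction x with
    | zero => simp [carrierInf, tEvol_one_apply_one hη]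
    | succ x ih => rw [carrierInf, ih, tEvol_one_apply_add_two hη, carrierInf]
  funext x
  rcases x with _ | _ | x
  · simp [tEvolInf, tEvol_apply_zero]
  · simp [tEvolInf, tEvol_one_apply_one hη, tEvol_one_apply_one hη.tEvolInf, carrierInf]
  · rw [tEvol_one_apply_add_two hη.tEvolInf]
    simp [tEvolInf, tEvol_one_apply_add_two hη, hc]

/-- After `x` sites the carrier holds at most `x` balls, so a capacity `ℓ ≥ x` is never
reached. -/
lemma carrier_eq_carrierInf (hη : IsBinary η) {ℓ x : ℕ} (hx : x ≤ ℓ) :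
    carrier η ℓ x = carrierInf η x := by
  induction x with
  | zero => rfl
  | succ x ih =>
    have := carrierInf_le η x
    have := carrierInf_nonneg η x
    rw [carrier, carrierInf, ih (by omega)]
    rcases hη (x + 1) with h | h <;> simp [h]
    · split_ifs <;> omega
    · omega

lemma tEvol_eq_tEvolInf (hη : IsBinary η) {ℓ x : ℕ} (hx : x ≤ ℓ) :
    tEvol η ℓ x = tEvolInf η x := by
  simp only [tEvol, tEvolInf, carrier_eq_carrierInf hη hx,
    carrier_eq_carrierInf hη ((x.sub_le 1).trans hx)]

end Evolution

section Walk

variable {η : ℕ → ℤ}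

def walk (η : ℕ → ℤ) : ℕ → ℤ
  | 0 => 0
  | x + 1 => walk η x + 2 * η (x + 1) - 1

def walkMin (η : ℕ → ℤ) : ℕ → ℤ
  | 0 => 0
  | x + 1 => min (walkMin η x) (walk η (x + 1))

lemma le_walkMin_iff {B : ℤ} {z : ℕ} : B ≤ walkMin η z ↔ ∀ y ≤ z, B ≤ walk η y := by
  induction z with
  | zero => simp [walkMin, walk]
  | succ z ih =>
    simp only [walkMin, le_min_iff, ih]
    exact ⟨fun h y hy => (Nat.le_succ_iff.1 hy).elim (h.1 y) (fun e => e ▸ h.2),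
      fun h => ⟨fun y hy => h y (by omega), h _ le_rfl⟩⟩

lemma walkMin_le_walk {y z : ℕ} (hyz : y ≤ z) : walkMin η z ≤ walk η y :=
  le_walkMin_iff.1 le_rfl y hyz

lemma carrierInf_eq_walk_sub_walkMin (hη : IsBinary η) (x : ℕ) :
    carrierInf η x = walk η x - walkMin η x := by
  induction x with
  | zero => rfl
  | succ x ih =>
    have := walkMin_le_walk (η := η) (le_refl x)
    rw [carrierInf, ih]
    simp only [walk, walkMin]
    rcases hη (x + 1) with h | h <;> simp [h] <;> omega

lemma recordInd_succ_eq_one_iff_walk (hη : IsBinary η) (x : ℕ) :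
    recordInd η (x + 1) = 1 ↔ walk η (x + 1) < walkMin η x := by
  have := walkMin_le_walk (η := η) (le_refl x)
  rw [recordInd_succ_eq_one_iff hη, carrierInf_eq_walk_sub_walkMin hη]
  simp only [walk]
  rcases hη (x + 1) with h | h <;> simp [h] <;> omega

/-- Records are the strict running minima of the walk. -/
lemma infinitelyManyRecords_iff (hη : IsBinary η) :
    InfinitelyManyRecords η ↔ ∀ B : ℤ, ∃ x, walk η x < B := by
  constructor
  · intro hrec
    have key : ∀ n : ℕ, ∃ x, walk η x ≤ -n := by
      intro n
      induction n with
      | zero => exact ⟨0, le_rfl⟩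
      | succ n ih =>
        obtain ⟨x, hx⟩ := ih
        obtain ⟨y, hy, hr⟩ := hrec (x + 1)
        obtain ⟨y, rfl⟩ : ∃ z, y = z + 1 := ⟨y - 1, by omega⟩
        have := (recordInd_succ_eq_one_iff_walk hη y).1 hr
        have := walkMin_le_walk (η := η) (show x ≤ y by omega)
        exact ⟨y + 1, by push_cast; omega⟩
    intro B
    obtain ⟨x, hx⟩ := key ((-B).toNat + 1)
    exact ⟨x, by omega⟩
  · intro hwalk N
    classical
    obtain ⟨x₁, hx₁, hmin⟩ :
        ∃ x₁, walk η x₁ < walkMin η N ∧ ∀ y < x₁, walkMin η N ≤ walk η y :=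
      let hex := hwalk (walkMin η N)
      ⟨Nat.find hex, Nat.find_spec hex, fun y hy => not_lt.1 (Nat.find_min hex hy)⟩
    have hN : N < x₁ := not_le.1 fun h => (walkMin_le_walk h).not_gt hx₁
    obtain ⟨x, rfl⟩ : ∃ x, x₁ = x + 1 := ⟨x₁ - 1, by omega⟩
    refine ⟨x + 1, hN.le, (recordInd_succ_eq_one_iff_walk hη x).2 ?_⟩
    have := le_walkMin_iff.2 fun y hy => hmin y (Nat.lt_succ_of_le hy)
    omega

lemma walk_tEvol (η : ℕ → ℤ) (ℓ x : ℕ) :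
    walk (tEvol η ℓ) x = walk η x - 2 * carrier η ℓ x := by
  induction x with
  | zero => rfl
  | succ x ih => simp only [walk, ih, tEvol, Nat.add_sub_cancel]; ring

lemma walk_tEvolInf (η : ℕ → ℤ) (x : ℕ) :
    walk (tEvolInf η) x = walk η x - 2 * carrierInf η x := by
  induction x with
  | zero => rfl
  | succ x ih => simp only [walk, ih, tEvolInf, Nat.add_sub_cancel]; ring

lemma InfinitelyManyRecords.tEvol (hη : IsBinary η) (hrec : InfinitelyManyRecords η)
    (ℓ : ℕ) : InfinitelyManyRecords (tEvol η ℓ) := by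
  refine (infinitelyManyRecords_iff (hη.tEvol ℓ)).2 fun B => ?_
  obtain ⟨x, hx⟩ := (infinitelyManyRecords_iff hη).1 hrec B
  exact ⟨x, by rw [walk_tEvol]; linarith [carrier_nonneg η ℓ x]⟩

lemma InfinitelyManyRecords.tEvolInf (hη : IsBinary η) (hrec : InfinitelyManyRecords η) :
    InfinitelyManyRecords (tEvolInf η) := by
  refine (infinitelyManyRecords_iff hη.tEvolInf).2 fun B => ?_
  obtain ⟨x, hx⟩ := (infinitelyManyRecords_iff hη).1 hrec B
  exact ⟨x, by rw [walk_tEvolInf]; linarith [carrierInf_nonneg η x]⟩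

end Walk

section FiniteCapacity

variable {η : ℕ → ℤ} {ℓ : ℕ}

lemma tEvol_succ (η : ℕ → ℤ) (ℓ x : ℕ) :
    tEvol η ℓ (x + 1) = η (x + 1) + carrier η ℓ x - carrier η ℓ (x + 1) := by
  simp [tEvol]

lemma carrier_eq_carrier_skip_one_add (hη : IsBinary η) {x i : ℕ} (hi : xiSeat η 1 x = i) :
    carrier η (ℓ + 1) x = carrier (skip η 1) ℓ i + seatW η x 1 := by
  induction x generalizing i with
  | zero =>
    rw [xiSeat_zero] at hi
    rw [show i = 0 by omega]
    rfl
  | succ x ih =>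
    obtain ⟨i', hi'⟩ := Int.eq_ofNat_of_zero_le (xiSeat_nonneg hη 1 x)
    have hc := ih hi'
    have := carrier_le η (ℓ + 1) x
    have := carrier_nonneg (skip η 1) ℓ i'
    have := carrier_le (skip η 1) ℓ i'
    rw [xiSeat_one_succ hη, hi'] at hi
    rw [seatW_succ_one, carrier]
    by_cases hkept : η (x + 1) = seatW η x 1
    · rw [if_pos hkept] at hi
      have hs := sSeat_succ_of_seatEvents_eq_zero hη hi'
        ((seatEvents_one_succ_eq_zero_iff hη x).2 hkept)
      have hp : skip η 1 (i' + 1) = η (x + 1) := by simp [skip, hs]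
      rw [show i = i' + 1 by omega, carrier, hp]
      rcases hη (x + 1) with ha | ha <;> simp [ha] at hkept ⊢ <;> split_ifs <;> omega
    · rw [if_neg hkept] at hi
      rw [show i = i' by omega]
      rcases hη (x + 1) with ha | ha <;> rcases hη.seatW x 1 with hw | hw <;>
        simp [ha, hw] at hkept hc ⊢ <;> split_ifs <;> omega

lemma carrier_eq_of_seatW_tEvol_eq (hη : IsBinary η) {x : ℕ}
    (h : seatW (tEvol η ℓ) x 1 = seatW η x 1) : carrier η ℓ x = ℓ * seatW η x 1 := by
  rcases x with _ | x
  · simp [carrier, seatW]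
  · rw [seatW_succ_one, seatW_succ_one, tEvol_succ] at h
    have := carrier_nonneg η ℓ x
    have := carrier_le η ℓ x
    rw [seatW_succ_one]
    rw [carrier] at h ⊢
    rcases hη (x + 1) with ha | ha <;> simp [ha] at h ⊢ <;> split_ifs at h ⊢ <;> omega

lemma carrier_ne_of_seatW_tEvol_ne (hη : IsBinary η) {x : ℕ}
    (h : seatW (tEvol η ℓ) x 1 ≠ seatW η x 1) : carrier η ℓ x ≠ ℓ * (1 - seatW η x 1) := by
  rcases x with _ | x
  · exact absurd rfl h
  · rw [seatW_succ_one, seatW_succ_one, tEvol_succ] at h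
    have := carrier_nonneg η ℓ x
    have := carrier_le η ℓ x
    rw [seatW_succ_one]
    rw [carrier] at h ⊢
    rcases hη (x + 1) with ha | ha <;> simp [ha] at h ⊢ <;> split_ifs at h ⊢ <;> omega

lemma tEvol_succ_ne_of_ne (hη : IsBinary η) {x : ℕ}
    (hx : η (x + 1) ≠ seatW η x 1) : tEvol η (ℓ + 1) (x + 1) ≠ η (x + 1) := by
  have := carrier_nonneg η (ℓ + 1) x
  have := carrier_le η (ℓ + 1) x
  rw [tEvol_succ, carrier]
  by_cases hg : seatW (tEvol η (ℓ + 1)) x 1 = seatW η x 1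
  · have hc := carrier_eq_of_seatW_tEvol_eq hη hg
    rcases hη (x + 1) with ha | ha <;> rcases hη.seatW x 1 with hw | hw <;>
      simp [ha, hw] at hx hc ⊢ <;> split_ifs <;> omega
  · have hc := carrier_ne_of_seatW_tEvol_ne hη hg
    rcases hη (x + 1) with ha | ha <;> rcases hη.seatW x 1 with hw | hw <;>
      simp [ha, hw] at hx hc ⊢ <;> split_ifs <;> omega

lemma tEvol_succ_eq_of_eq (hη : IsBinary η) {x : ℕ}
    (hg : seatW (tEvol η ℓ) x 1 = seatW η x 1) (hx : η (x + 1) = seatW η x 1) :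
    tEvol η ℓ (x + 1) = η (x + 1) := by
  have hc := carrier_eq_of_seatW_tEvol_eq hη hg
  rw [tEvol_succ, carrier]
  rcases hη (x + 1) with ha | ha <;> simp [ha, ← hx] at hc ⊢ <;> split_ifs <;> omega

lemma xiSeat_tEvol (hη : IsBinary η) (x : ℕ) :
    xiSeat (tEvol η (ℓ + 1)) 1 x =
      xiSeat η 1 x + if seatW (tEvol η (ℓ + 1)) x 1 = seatW η x 1 then 0 else 1 := by
  induction x with
  | zero => simp [xiSeat_zero, seatW]
  | succ x ih =>
    have hE := tEvol_succ_ne_of_ne hη (ℓ := ℓ) (x := x)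
    have hF := tEvol_succ_eq_of_eq hη (ℓ := ℓ + 1) (x := x)
    rw [xiSeat_one_succ hη, xiSeat_one_succ (hη.tEvol _), ih, seatW_succ_one, seatW_succ_one]
    rcases hη (x + 1) with ha | ha <;> rcases hη.seatW x 1 with hw | hw <;>
      rcases hη.tEvol (ℓ + 1) (x + 1) with hb | hb <;>
      rcases (hη.tEvol (ℓ + 1)).seatW x 1 with hg | hg <;>
      simp [ha, hw, hb, hg] at hE hF ⊢

lemma tEvol_skip_one (hη : IsBinary η) (hrec : InfinitelyManyRecords η) (i : ℕ) :
    tEvol (skip η 1) ℓ (i + 1) = tEvol η (ℓ + 1) (sSeat η 1 (i + 1)) := by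
  obtain ⟨x, hs, hξ, hev⟩ := exists_sSeat_succ hη hrec 1 i
  have hkept := (seatEvents_one_succ_eq_zero_iff hη x).1 hev
  have hξ' : xiSeat η 1 (x + 1) = ((i + 1 : ℕ) : ℤ) := by
    rw [xiSeat_one_succ hη, if_pos hkept, hξ]; push_cast; ring
  have h0 := carrier_eq_carrier_skip_one_add (ℓ := ℓ) hη hξ
  have h1 := carrier_eq_carrier_skip_one_add (ℓ := ℓ) hη hξ'
  rw [seatW_succ_one] at h1
  rw [hs, tEvol_succ, tEvol_succ, show skip η 1 (i + 1) = η (x + 1) by simp [skip, hs]]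
  linarith

lemma tEvol_sSeat_tEvol (hη : IsBinary η) (hrec : InfinitelyManyRecords η) (n : ℕ) :
    tEvol η (ℓ + 1) (sSeat (tEvol η (ℓ + 1)) 1 (n + 1)) =
      if n = 0 then 0 else tEvol η (ℓ + 1) (sSeat η 1 n) := by
  obtain ⟨y, hs, hξγ, hev⟩ := exists_sSeat_succ (hη.tEvol _) (hrec.tEvol hη _) 1 n
  have hB := xiSeat_tEvol (ℓ := ℓ) hη y
  rw [hs]
  -- If `T_{ℓ+1} η` and `η` agree at `y`, then `y` is a kept site of `η` (or `y = 0`);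
  -- otherwise `y + 1` is.
  by_cases hD : seatW (tEvol η (ℓ + 1)) y 1 = seatW η y 1
  · rw [if_pos hD, hξγ, add_zero] at hB
    rw [(seatEvents_one_succ_eq_zero_iff (hη.tEvol _) y).1 hev]
    rcases y with _ | y
    · rw [xiSeat_zero] at hB
      rw [if_pos (by omega)]
      rfl
    · have hkept : η (y + 1) = seatW η y 1 := by
        by_contra hne
        exact tEvol_succ_ne_of_ne hη hne (by rwa [seatW_succ_one, seatW_succ_one] at hD)
      obtain ⟨i, hi⟩ := Int.eq_ofNat_of_zero_le (xiSeat_nonneg hη 1 y)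
      have hstep := xiSeat_one_succ hη y
      rw [if_pos hkept, ← hB, hi] at hstep
      rw [if_neg (by omega), show n = i + 1 by omega, seatW_succ_one,
        sSeat_succ_of_seatEvents_eq_zero hη hi ((seatEvents_one_succ_eq_zero_iff hη y).2 hkept)]
  · rw [if_neg hD, hξγ] at hB
    have hz : xiSeat (tEvol η (ℓ + 1)) 1 (y + 1) = ((n + 1 : ℕ) : ℤ) :=
      hs ▸ xiSeat_sSeat (hη.tEvol _) (hrec.tEvol hη _) 1 (n + 1)
    have hB' := xiSeat_tEvol (ℓ := ℓ) hη (y + 1)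
    have hstep := xiSeat_one_succ hη y
    obtain ⟨i, hi⟩ := Int.eq_ofNat_of_zero_le (xiSeat_nonneg hη 1 y)
    have hkept : η (y + 1) = seatW η y 1 := by
      by_contra hne
      rw [if_neg hne] at hstep
      split_ifs at hB' <;> push_cast at hz <;> omega
    rw [if_pos hkept] at hstep
    rw [if_neg (by omega), show n = i + 1 by omega,
      sSeat_succ_of_seatEvents_eq_zero hη hi ((seatEvents_one_succ_eq_zero_iff hη y).2 hkept)]

lemma skip_one_tEvol (hη : IsBinary η) (hrec : InfinitelyManyRecords η) :
    skip (tEvol η (ℓ + 1)) 1 = tEvol (tEvol (skip η 1) ℓ) 1 := by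
  funext n
  rcases n with _ | _ | n
  · simp [skip, sSeat_zero, tEvol]
  · simp only [skip, tEvol_sSeat_tEvol hη hrec 0, if_pos,
      tEvol_one_apply_one ((hη.skip 1).tEvol ℓ)]
  · simp only [skip, tEvol_sSeat_tEvol hη hrec (n + 1), tEvol_skip_one hη hrec,
      tEvol_one_apply_add_two ((hη.skip 1).tEvol ℓ), if_neg (Nat.succ_ne_zero n)]

end FiniteCapacity

section InfiniteCapacity

variable {η : ℕ → ℤ}

lemma seatW_congr {ρ ρ' : ℕ → ℤ} {x : ℕ} (h : ∀ y ≤ x, ρ y = ρ' y) (k : ℕ) :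
    seatW ρ x k = seatW ρ' x k := by
  induction x generalizing k with
  | zero => rfl
  | succ x ih =>
    have ih' : ∀ m, seatW ρ x m = seatW ρ' x m := fun m => ih (fun y hy => h y (by omega)) m
    simp only [seatW, ih', h (x + 1) le_rfl]

lemma xiSeat_congr {ρ ρ' : ℕ → ℤ} {M : ℕ} (h : ∀ y ≤ M, ρ y = ρ' y) (k : ℕ) {x : ℕ}
    (hx : x ≤ M) : xiSeat ρ k x = xiSeat ρ' k x := by
  have hW : ∀ y ∈ Icc 1 x, ∀ m, seatW ρ (y - 1) m = seatW ρ' (y - 1) m :=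
    fun y hy m => seatW_congr (fun z hz => h z (by simp at hy; omega)) m
  have hρ : ∀ y ∈ Icc 1 x, ρ y = ρ' y := fun y hy => h y (by simp at hy; omega)
  simp only [xiSeat, seatUp, seatDown]
  congr 1
  refine sum_congr rfl fun y hy => sum_congr rfl fun m _ => ?_
  simp only [hW y hy, hρ y hy]

lemma sSeat_congr {ρ ρ' : ℕ → ℤ} {M k i : ℕ} (h : ∀ y ≤ M, ρ y = ρ' y)
    (hx : ∃ x ≤ M, xiSeat ρ k x = i) : sSeat ρ' k i = sSeat ρ k i := by
  obtain ⟨x, hxM, hx⟩ := hx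
  have hle : sSeat ρ k i ≤ M := (sSeat_le_of_xiSeat_eq hx).trans hxM
  have hρ := xiSeat_sSeat_of_exists ⟨x, hx⟩
  have hρ' : xiSeat ρ' k (sSeat ρ k i) = i := by rwa [← xiSeat_congr h k hle]
  have hle' : sSeat ρ' k i ≤ sSeat ρ k i := sSeat_le_of_xiSeat_eq hρ'
  refine le_antisymm hle' (sSeat_le_of_xiSeat_eq ?_)
  rw [xiSeat_congr h k (hle'.trans hle)]
  exact xiSeat_sSeat_of_exists ⟨_, hρ'⟩

lemma skip_one_tEvolInf (hη : IsBinary η) (hrec : InfinitelyManyRecords η) :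
    skip (tEvolInf η) 1 = tEvol (tEvolInf (skip η 1)) 1 := by
  funext n
  set X := sSeat (tEvolInf η) 1 n
  set L := X + n
  have hagree : ∀ y ≤ L + 1, tEvolInf η y = tEvol η (L + 1) y :=
    fun y hy => (tEvol_eq_tEvolInf hη hy).symm
  have hs : sSeat (tEvol η (L + 1)) 1 n = X :=
    sSeat_congr hagree ⟨X, by omega, xiSeat_sSeat hη.tEvolInf (hrec.tEvolInf hη) 1 n⟩
  have hL : skip (tEvolInf η) 1 n = skip (tEvol η (L + 1)) 1 n := by
    show tEvolInf η X = tEvol η (L + 1) (sSeat (tEvol η (L + 1)) 1 n)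
    rw [hs]
    exact hagree X (by omega)
  have hp := hη.skip 1
  rw [hL, skip_one_tEvol hη hrec]
  rcases n with _ | _ | m
  · simp only [tEvol_apply_zero, tEvol_eq_tEvolInf hp (Nat.zero_le L)]
  · rw [tEvol_one_apply_one (hp.tEvol L), tEvol_one_apply_one hp.tEvolInf]
  · rw [tEvol_one_apply_add_two (hp.tEvol L), tEvol_one_apply_add_two hp.tEvolInf,
      tEvol_eq_tEvolInf hp (by omega)]

end InfiniteCapacity

lemma skip_tEvol_one {η : ℕ → ℤ} (hη : IsBinary η) (hrec : InfinitelyManyRecords η)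
    (k : ℕ) :
    skip (tEvol η 1) k = tEvol (skip η k) 1 := by
  induction k generalizing η with
  | zero => rw [skip_zero, skip_zero]
  | succ k ih =>
    rw [skip_succ (hη.tEvol 1) (hrec.tEvol hη 1), skip_one_tEvol hη hrec, tEvol_zero_right,
      ih (hη.skip 1) (hrec.skip_one hη), ← skip_succ hη hrec k]

lemma skip_tEvolInf {η : ℕ → ℤ} (hη : IsBinary η) (hrec : InfinitelyManyRecords η)
    (k : ℕ) :
    skip (tEvolInf η) k = tEvolInf (skip (tEvol η k) k) := by
  induction k generalizing η with
  | zero => rw [skip_zero, tEvol_zero_right, skip_zero]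
  | succ k ih =>
    have hp := hη.skip 1
    have hprec := hrec.skip_one hη
    rw [skip_succ hη.tEvolInf (hrec.tEvolInf hη), skip_one_tEvolInf hη hrec,
      skip_tEvol_one hp.tEvolInf (hprec.tEvolInf hp), ih hp hprec,
      skip_succ (hη.tEvol _) (hrec.tEvol hη _), skip_one_tEvol hη hrec,
      skip_tEvol_one (hp.tEvol k) (hprec.tEvol hp k), tEvolInf_tEvol_one ((hp.tEvol k).skip k)]

theorem skip_commutes_with_T_general (η : ℕ → ℤ) (hη : ∀ x, η x = 0 ∨ η x = 1)
    (hrec : ∀ N : ℕ, ∃ x, N ≤ x ∧ recordInd η x = 1)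
    (k : ℕ) :
    skip (tEvol η 1) k = tEvol (skip η k) 1 ∧
    skip (tEvolInf η) k = tEvolInf (skip (tEvol η k) k) :=
  ⟨skip_tEvol_one hη hrec k, skip_tEvolInf hη hrec k⟩

/-- for configurations with infinitely many records, the k-skip map
commutes with the BBS(1) evolution, and intertwines with the BBS(∞) evolution via T_k. -/
theorem skip_commutes_with_T (η : ℕ → ℤ) (hη : ∀ x, η x = 0 ∨ η x = 1)
    (hrec : ∀ N : ℕ, ∃ x, N ≤ x ∧ recordInd η x = 1)
    (k : ℕ) (hk : 1 ≤ k) :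
    skip (tEvol η 1) k = tEvol (skip η k) 1 ∧
    skip (tEvolInf η) k = tEvolInf (skip (tEvol η k) k) :=
  skip_commutes_with_T_general η hη hrec k
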